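/- arXiv:1910.02502 — 2 statements merged into one kernel-verified Lean document; each statement's English description precedes it below -/
import Mathlib

section
/- Let d ≥ 1, 1 ≤ p < 2 and 0 < γ < 2d(1/p − 1/2). There is a constant C depending only on d, γ and p such that for κ₂ = k₂ ∗ S_{a,t} with any a > 0, t ∈ ℝ (and κ₂ = k₂ when a = 0): (i) for all f, g, h ∈ L^p(ℝ^d), ‖[κ₂ · (f ∗ ḡ)] ∗ h‖_{L^p} ≤ C ‖f‖_{L^p} ‖g‖_{L^p} ‖h‖_{L^p}; and (ii) for all f, g ∈ L^p(ℝ^d) and h ∈ L²(ℝ^d), ‖[κ₂ · (f ∗ ḡ)] ∗ h‖_{L²} ≤ C ‖f‖_{L^p} ‖g‖_{L^p} ‖h‖_{L²}. The constant C is independent of a and t. -/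
open MeasureTheory Real
open scoped ENNReal

/-- Convolution of two complex functions on `ℝ^d`. -/
noncomputable def convC {d : ℕ} (f g : EuclideanSpace ℝ (Fin d) → ℂ) :
    EuclideanSpace ℝ (Fin d) → ℂ :=
  fun x => ∫ y, f y * g (x - y)

/-- Convolution of two real functions on `ℝ^d`. -/
noncomputable def convR {d : ℕ} (f g : EuclideanSpace ℝ (Fin d) → ℝ) :
    EuclideanSpace ℝ (Fin d) → ℝ :=
  fun x => ∫ y, f y * g (x - y)

/-- The far-away piece `k₂` of the Riesz kernel `|x|^{γ-d}`. -/
noncomputable def kTwo (d : ℕ) (γ : ℝ) : EuclideanSpace ℝ (Fin d) → ℝ :=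
  fun x => if 1 < ‖x‖ then ‖x‖ ^ (γ - (d : ℝ)) else 0

/-- The kernel `S_{a,t}(ξ) = a|t| (4a²t² + |ξ|²)^{-(d+1)/2}`. -/
noncomputable def Skernel (d : ℕ) (a t : ℝ) : EuclideanSpace ℝ (Fin d) → ℝ :=
  fun ξ => a * |t| * (4 * a ^ 2 * t ^ 2 + ‖ξ‖ ^ 2) ^ (-(((d : ℝ) + 1) / 2))

/-- `κ₂ = k₂ ∗ S_{a,t}` for `a > 0` and `κ₂ = k₂` for `a = 0`. -/
noncomputable def kappaTwo (d : ℕ) (γ a t : ℝ) : EuclideanSpace ℝ (Fin d) → ℝ :=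
  if a = 0 then kTwo d γ else convR (kTwo d γ) (Skernel d a t)

lemma ennnorm_eq_ofReal_aux {r : ℝ} (h : 0 ≤ r) : (‖r‖₊ : ℝ≥0∞) = ENNReal.ofReal r :=
  Real.enorm_eq_ofReal h

lemma ennnorm_integral_le_aux {α G : Type*} [NormedAddCommGroup G] [NormedSpace ℝ G]
    {m : MeasurableSpace α} {μ : Measure α} (f : α → G) :
    (‖∫ a, f a ∂μ‖₊ : ℝ≥0∞) ≤ ∫⁻ a, (‖f a‖₊ : ℝ≥0∞) ∂μ :=
  enorm_integral_le_lintegral_enorm f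

lemma eLpNorm_eq_lintegral_rpow_nnnorm_aux {α F : Type*} [NormedAddCommGroup F]
    {m0 : MeasurableSpace α} {p : ℝ≥0∞} {μ : Measure α} (hp0 : p ≠ 0) (hp_top : p ≠ ⊤)
    {f : α → F} :
    eLpNorm f p μ = (∫⁻ x, (‖f x‖₊ : ℝ≥0∞) ^ p.toReal ∂μ) ^ (1 / p.toReal) :=
  eLpNorm_eq_lintegral_rpow_enorm_toReal hp0 hp_top

section Helpers

open Module

variable {d : ℕ}
local notation "E" => EuclideanSpace ℝ (Fin d)

/-- Tonelli for convolutions. -/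
lemma lintegral_lintegral_conv {A B : E → ℝ≥0∞} (hA : Measurable A) (hB : Measurable B) :
    ∫⁻ x, ∫⁻ y, A y * B (x - y) = (∫⁻ y, A y) * ∫⁻ y, B y := by
  have hsub : Measurable fun q : E × E => q.1 - q.2 := measurable_fst.sub measurable_snd
  rw [lintegral_lintegral_swap ((hA.comp measurable_snd).mul (hB.comp hsub)).aemeasurable]
  calc ∫⁻ y, ∫⁻ x, A y * B (x - y)
      = ∫⁻ y, A y * ∫⁻ x, B (x - y) := by
        refine lintegral_congr fun y => lintegral_const_mul _ ?_
        exact hB.comp (measurable_id.sub measurable_const)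
    _ = ∫⁻ y, A y * ∫⁻ x, B x := by
        refine lintegral_congr fun y => ?_
        rw [(measurePreserving_sub_right volume y).lintegral_comp hB]
    _ = (∫⁻ y, A y) * ∫⁻ y, B y := lintegral_mul_const _ hA

/-- convolution commutes (lintegral form). -/
lemma lintegral_conv_comm {A B : E → ℝ≥0∞} (hA : Measurable A) (hB : Measurable B) (x : E) :
    ∫⁻ y, A y * B (x - y) = ∫⁻ y, B y * A (x - y) := by
  have hf : Measurable fun y : E => A y * B (x - y) :=
    hA.mul (hB.comp (measurable_const.sub measurable_id))
  calc ∫⁻ y, A y * B (x - y)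
      = ∫⁻ y, A (x - y) * B (x - (x - y)) :=
        ((Measure.measurePreserving_sub_left volume x).lintegral_comp hf).symm
    _ = ∫⁻ y, B y * A (x - y) := lintegral_congr fun y => by rw [sub_sub_cancel, mul_comm]

/-- Young's inequality with an `L¹` factor, in `lintegral` form. -/
lemma young_one {A B : E → ℝ≥0∞} (hA : Measurable A) (hB : Measurable B) {r : ℝ} (hr : 1 ≤ r) :
    ∫⁻ x, (∫⁻ y, A y * B (x - y)) ^ r ≤ (∫⁻ y, A y) ^ r * ∫⁻ x, B x ^ r := by
  have hr0 : (0:ℝ) < r := lt_of_lt_of_le one_pos hr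
  have hBr : Measurable fun x => B x ^ r := hB.pow_const r
  have IH : ∫⁻ x : E, ∫⁻ y, A y * B (x - y) ^ r = (∫⁻ y, A y) * ∫⁻ x, B x ^ r :=
    lintegral_lintegral_conv hA hBr
  rcases eq_or_lt_of_le hr with hr1 | hr1
  · simp only [← hr1, ENNReal.rpow_one]
    exact le_of_eq (lintegral_lintegral_conv hA hB)
  set r' : ℝ := r / (r - 1) with hr'def
  have hr'0 : (0:ℝ) < r' := div_pos hr0 (by linarith)
  have hconj : r'.HolderConjugate r :=
    ((Real.holderConjugate_iff_eq_conjExponent hr1).mpr rfl).symm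
  have hsum : 1 / r' + 1 / r = 1 := by simpa [one_div] using hconj.inv_add_inv_eq_one
  have key : ∀ x : E, (∫⁻ y, A y * B (x - y)) ≤
      (∫⁻ y, A y) ^ (1/r') * (∫⁻ y, A y * B (x - y) ^ r) ^ (1/r) := by
    intro x
    have hf : AEMeasurable (fun y => A y ^ (1/r')) volume := (hA.pow_const _).aemeasurable
    have hg : AEMeasurable (fun y => A y ^ (1/r) * B (x - y)) volume :=
      ((hA.pow_const _).mul (hB.comp (measurable_const.sub measurable_id))).aemeasurable
    have H := ENNReal.lintegral_mul_le_Lp_mul_Lq volume hconj hf hg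
    calc (∫⁻ y, A y * B (x - y))
        = ∫⁻ y, (fun y => A y ^ (1/r')) y * (fun y => A y ^ (1/r) * B (x - y)) y := by
          refine lintegral_congr fun y => ?_
          simp only
          rw [← mul_assoc, ← ENNReal.rpow_add_of_nonneg _ _ (by positivity) (by positivity),
            hsum, ENNReal.rpow_one]
      _ ≤ (∫⁻ y, ((fun y => A y ^ (1/r')) y) ^ r') ^ (1/r') *
          (∫⁻ y, ((fun y => A y ^ (1/r) * B (x - y)) y) ^ r) ^ (1/r) := H
      _ = (∫⁻ y, A y) ^ (1/r') * (∫⁻ y, A y * B (x - y) ^ r) ^ (1/r) := by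
          congr 1
          · congr 1
            refine lintegral_congr fun y => ?_
            rw [← ENNReal.rpow_mul, one_div, inv_mul_cancel₀ hr'0.ne', ENNReal.rpow_one]
          · congr 1
            refine lintegral_congr fun y => ?_
            rw [ENNReal.mul_rpow_of_nonneg _ _ hr0.le, ← ENNReal.rpow_mul, one_div,
              inv_mul_cancel₀ hr0.ne', ENNReal.rpow_one]
  have hinner : Measurable fun x : E => ∫⁻ y, A y * B (x - y) ^ r := by
    apply Measurable.lintegral_prod_right'
      (f := fun q : E × E => A q.2 * B (q.1 - q.2) ^ r)
    exact (hA.comp measurable_snd).mul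
      (((hB.comp (measurable_fst.sub measurable_snd))).pow_const r)
  calc ∫⁻ x, (∫⁻ y, A y * B (x - y)) ^ r
      ≤ ∫⁻ x, (∫⁻ y, A y) ^ (r - 1) * ∫⁻ y, A y * B (x - y) ^ r := by
        refine lintegral_mono fun x => ?_
        refine le_trans (ENNReal.rpow_le_rpow (key x) hr0.le) (le_of_eq ?_)
        rw [ENNReal.mul_rpow_of_nonneg _ _ hr0.le, ← ENNReal.rpow_mul, ← ENNReal.rpow_mul,
          one_div, one_div, inv_mul_cancel₀ hr0.ne', ENNReal.rpow_one]
        congr 2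
        rw [hr'def]
        field_simp
    _ = (∫⁻ y, A y) ^ (r - 1) * ∫⁻ x, ∫⁻ y, A y * B (x - y) ^ r :=
        lintegral_const_mul _ hinner
    _ = (∫⁻ y, A y) ^ (r - 1) * ((∫⁻ y, A y) * ∫⁻ x, B x ^ r) := by rw [IH]
    _ = (∫⁻ y, A y) ^ r * ∫⁻ x, B x ^ r := by
        rw [← mul_assoc]
        congr 1
        nth_rewrite 2 [← ENNReal.rpow_one (∫⁻ y, A y)]
        rw [← ENNReal.rpow_add_of_nonneg _ _ (by linarith) zero_le_one, sub_add_cancel]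
lemma trilinear_holder {κ F G : E → ℝ≥0∞} (hκ : Measurable κ) (hF : Measurable F)
    (hG : Measurable G) {p : ℝ} (hp1 : 1 < p) (hp2 : p < 2) :
    ∫⁻ y, κ y * ∫⁻ z, F z * G (y - z) ≤
      (∫⁻ x, κ x ^ (2 - 2/p)⁻¹) ^ (2 - 2/p) *
        ((∫⁻ x, F x ^ p) ^ (1/p) * (∫⁻ x, G x ^ p) ^ (1/p)) := by
  have hp0 : (0:ℝ) < p := by linarith
  set e1 : ℝ := 1 - 1/p with he1def
  set e3 : ℝ := 2/p - 1 with he3def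
  have he1 : 0 < e1 := by
    rw [he1def]; rw [sub_pos, one_div]; exact inv_lt_one_of_one_lt₀ hp1
  have he3 : 0 < e3 := by
    rw [he3def, sub_pos]; rw [lt_div_iff₀ hp0]; linarith
  have he13 : e1 + e3 = 1/p := by rw [he1def, he3def]; ring
  have hE : 2 - 2/p = 2 * e1 := by rw [he1def]; ring
  set V : ℝ := (2 - 2/p)⁻¹ with hVdef
  have h2e1 : (0:ℝ) < 2 * e1 := by linarith
  have hV0 : 0 < V := by rw [hVdef, hE]; positivity
  have hVe1 : V * e1 = 1/2 := by
    rw [hVdef, hE]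
    field_simp
  -- measurability of building blocks
  have hsub : Measurable fun q : E × E => q.1 - q.2 := measurable_fst.sub measurable_snd
  have hadd : Measurable fun q : E × E => q.1 + q.2 := measurable_fst.add measurable_snd
  set Q : ℝ≥0∞ := ∫⁻ x, κ x ^ V with hQdef
  have hκV : Measurable fun x => κ x ^ V := hκ.pow_const V
  -- Step 1: rewrite T as a double integral over the product
  have step1 : ∫⁻ y, κ y * ∫⁻ z, F z * G (y - z)
      = ∫⁻ z, ∫⁻ w, F z * (κ (z + w) * G w) := by
    calc ∫⁻ y, κ y * ∫⁻ z, F z * G (y - z)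
        = ∫⁻ y, ∫⁻ z, κ y * (F z * G (y - z)) := by
          refine lintegral_congr fun y => ?_
          exact (lintegral_const_mul _ (hF.mul (hG.comp (measurable_const.sub measurable_id)))).symm
      _ = ∫⁻ z, ∫⁻ y, κ y * (F z * G (y - z)) := by
          apply lintegral_lintegral_swap
          exact (((hκ.comp measurable_fst).mul ((hF.comp measurable_snd).mul
            (hG.comp (measurable_fst.sub measurable_snd))))).aemeasurable
      _ = ∫⁻ z, ∫⁻ y, F z * (κ y * G (y - z)) := by
          refine lintegral_congr fun z => lintegral_congr fun y => by ring
      _ = ∫⁻ z, F z * ∫⁻ y, κ y * G (y - z) := by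
          refine lintegral_congr fun z => ?_
          exact lintegral_const_mul _ (hκ.mul (hG.comp (measurable_id.sub measurable_const)))
      _ = ∫⁻ z, F z * ∫⁻ w, κ (z + w) * G w := by
          refine lintegral_congr fun z => ?_
          congr 1
          have hm : Measurable fun y : E => κ y * G (y - z) :=
            hκ.mul (hG.comp (measurable_id.sub measurable_const))
          have := (measurePreserving_add_left volume z).lintegral_comp hm
          rw [← this]
          exact lintegral_congr fun w => by rw [add_sub_cancel_left]
      _ = ∫⁻ z, ∫⁻ w, F z * (κ (z + w) * G w) := by
          refine lintegral_congr fun z => ?_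
          exact (lintegral_const_mul _ ((hκ.comp (measurable_const.add measurable_id)).mul hG)).symm
  -- pointwise identity
  have hfm0 : Measurable fun q : E × E => F q.1 ^ p * κ (q.1 + q.2) ^ V :=
    (hF.comp measurable_fst).pow_const p |>.mul ((hκ.comp hadd).pow_const V)
  have hfm1 : Measurable fun q : E × E => G q.2 ^ p * κ (q.1 + q.2) ^ V :=
    (hG.comp measurable_snd).pow_const p |>.mul ((hκ.comp hadd).pow_const V)
  have hfm2 : Measurable fun q : E × E => F q.1 ^ p * G q.2 ^ p :=
    ((hF.comp measurable_fst).pow_const p).mul ((hG.comp measurable_snd).pow_const p)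
  have hptwise : ∀ x y k : ℝ≥0∞, x * (k * y) =
      (x ^ p * k ^ V) ^ e1 * ((y ^ p * k ^ V) ^ e1 * (x ^ p * y ^ p) ^ e3) := by
    intro x y k
    have hone : ∀ u : ℝ≥0∞, u ^ (p * e1) * u ^ (p * e3) = u := by
      intro u
      rw [← ENNReal.rpow_add_of_nonneg _ _ (by positivity) (by positivity), ← mul_add, he13]
      rw [mul_one_div, div_self hp0.ne', ENNReal.rpow_one]
    have hkk : k ^ (V * e1) * k ^ (V * e1) = k := by
      rw [← ENNReal.rpow_add_of_nonneg _ _ (by positivity) (by positivity), hVe1]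
      norm_num
    calc x * (k * y) = (x ^ (p*e1) * x ^ (p*e3)) * ((k ^ (V*e1) * k ^ (V*e1)) *
          (y ^ (p*e1) * y ^ (p*e3))) := by rw [hone, hone, hkk]
      _ = (x ^ p * k ^ V) ^ e1 * ((y ^ p * k ^ V) ^ e1 * (x ^ p * y ^ p) ^ e3) := by
          rw [ENNReal.mul_rpow_of_nonneg _ _ he1.le, ENNReal.mul_rpow_of_nonneg _ _ he1.le,
            ENNReal.mul_rpow_of_nonneg _ _ he3.le]
          simp only [← ENNReal.rpow_mul]
          ring
  -- Hölder with three factors on the product space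
  set μ2 : Measure (E × E) := (volume : Measure E).prod volume with hμ2
  have holder : ∫⁻ q, (fun q : E × E => F q.1 * (κ (q.1 + q.2) * G q.2)) q ∂μ2 ≤
      (∫⁻ q, F q.1 ^ p * κ (q.1 + q.2) ^ V ∂μ2) ^ e1 *
        ((∫⁻ q, G q.2 ^ p * κ (q.1 + q.2) ^ V ∂μ2) ^ e1 *
          (∫⁻ q, F q.1 ^ p * G q.2 ^ p ∂μ2) ^ e3) := by
    have H := ENNReal.lintegral_prod_norm_pow_le (μ := μ2) (Finset.univ : Finset (Fin 3))
      (f := ![fun q : E × E => F q.1 ^ p * κ (q.1 + q.2) ^ V,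
              fun q : E × E => G q.2 ^ p * κ (q.1 + q.2) ^ V,
              fun q : E × E => F q.1 ^ p * G q.2 ^ p])
      (p := ![e1, e1, e3]) ?_ ?_ ?_
    · refine le_trans (le_of_eq ?_) (le_trans H (le_of_eq ?_))
      · refine lintegral_congr fun q => ?_
        rw [Fin.prod_univ_three]
        simp only [Matrix.cons_val_zero, Matrix.cons_val_one, Matrix.head_cons,
          Matrix.cons_val_two, Matrix.tail_cons]
        rw [hptwise (F q.1) (G q.2) (κ (q.1 + q.2)), mul_assoc]
      · rw [Fin.prod_univ_three]
        simp only [Matrix.cons_val_zero, Matrix.cons_val_one, Matrix.head_cons,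
          Matrix.cons_val_two, Matrix.tail_cons]
        rw [mul_assoc]
    · intro i _
      fin_cases i
      · exact hfm0.aemeasurable
      · exact hfm1.aemeasurable
      · exact hfm2.aemeasurable
    · rw [Fin.sum_univ_three]
      simp only [Matrix.cons_val_zero, Matrix.cons_val_one, Matrix.head_cons,
        Matrix.cons_val_two, Matrix.tail_cons]
      rw [he1def, he3def]; field_simp; ring
    · intro i _
      fin_cases i <;> simp [he1.le, he3.le]
  -- compute the three integrals
  set A : ℝ≥0∞ := ∫⁻ x, F x ^ p with hAdef
  set B : ℝ≥0∞ := ∫⁻ x, G x ^ p with hBdef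
  have hI0 : ∫⁻ q, F q.1 ^ p * κ (q.1 + q.2) ^ V ∂μ2 = A * Q := by
    rw [hμ2, lintegral_prod _ hfm0.aemeasurable]
    calc ∫⁻ z, ∫⁻ w, F z ^ p * κ (z + w) ^ V
        = ∫⁻ z, F z ^ p * ∫⁻ w, κ (z + w) ^ V := by
          refine lintegral_congr fun z => ?_
          exact lintegral_const_mul _ ((hκ.comp (measurable_const.add measurable_id)).pow_const V)
      _ = ∫⁻ z, F z ^ p * Q := by
          refine lintegral_congr fun z => ?_
          rw [(measurePreserving_add_left volume z).lintegral_comp hκV]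
      _ = A * Q := lintegral_mul_const _ (hF.pow_const p)
  have hI1 : ∫⁻ q, G q.2 ^ p * κ (q.1 + q.2) ^ V ∂μ2 = B * Q := by
    rw [hμ2, lintegral_prod_symm _ hfm1.aemeasurable]
    calc ∫⁻ w, ∫⁻ z, G w ^ p * κ (z + w) ^ V
        = ∫⁻ w, G w ^ p * ∫⁻ z, κ (z + w) ^ V := by
          refine lintegral_congr fun w => ?_
          exact lintegral_const_mul _ ((hκ.comp (measurable_id.add measurable_const)).pow_const V)
      _ = ∫⁻ w, G w ^ p * Q := by
          refine lintegral_congr fun w => ?_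
          rw [(measurePreserving_add_right volume w).lintegral_comp hκV]
      _ = B * Q := lintegral_mul_const _ (hG.pow_const p)
  have hI2 : ∫⁻ q, F q.1 ^ p * G q.2 ^ p ∂μ2 = A * B := by
    rw [hμ2, lintegral_prod _ hfm2.aemeasurable]
    calc ∫⁻ z, ∫⁻ w, F z ^ p * G w ^ p
        = ∫⁻ z, F z ^ p * B := by
          refine lintegral_congr fun z => ?_
          exact lintegral_const_mul _ (hG.pow_const p)
      _ = A * B := lintegral_mul_const _ (hF.pow_const p)
  -- put everything together
  have hprodform : ∫⁻ z, ∫⁻ w, F z * (κ (z + w) * G w)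
      = ∫⁻ q, (fun q : E × E => F q.1 * (κ (q.1 + q.2) * G q.2)) q ∂μ2 := by
    rw [hμ2]
    exact (lintegral_prod _ ((hF.comp measurable_fst).mul
      ((hκ.comp hadd).mul (hG.comp measurable_snd))).aemeasurable).symm
  rw [step1, hprodform]
  refine le_trans holder (le_of_eq ?_)
  rw [hI0, hI1, hI2, hE]
  rw [ENNReal.mul_rpow_of_nonneg _ _ he1.le, ENNReal.mul_rpow_of_nonneg _ _ he1.le,
    ENNReal.mul_rpow_of_nonneg _ _ he3.le]
  have hQ2 : Q ^ e1 * Q ^ e1 = Q ^ (2 * e1) := by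
    rw [← ENNReal.rpow_add_of_nonneg _ _ he1.le he1.le]; ring_nf
  have hA2 : A ^ e1 * A ^ e3 = A ^ (1/p) := by
    rw [← ENNReal.rpow_add_of_nonneg _ _ he1.le he3.le, he13]
  have hB2 : B ^ e1 * B ^ e3 = B ^ (1/p) := by
    rw [← ENNReal.rpow_add_of_nonneg _ _ he1.le he3.le, he13]
  calc A ^ e1 * Q ^ e1 * (B ^ e1 * Q ^ e1 * (A ^ e3 * B ^ e3))
      = (Q ^ e1 * Q ^ e1) * ((A ^ e1 * A ^ e3) * (B ^ e1 * B ^ e3)) := by ring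
    _ = Q ^ (2 * e1) * (A ^ (1/p) * B ^ (1/p)) := by rw [hQ2, hA2, hB2]
noncomputable def Jint (d : ℕ) (s : ℝ) : ℝ≥0∞ :=
  ∫⁻ x : EuclideanSpace ℝ (Fin d), ENNReal.ofReal ((1 + ‖x‖) ^ (-s))
noncomputable def CSbound (d : ℕ) : ℝ≥0∞ :=
  ENNReal.ofReal (2 ^ (((d : ℝ) + 1) / 2)) * Jint d ((d : ℝ) + 1)




lemma Jint_lt_top {s : ℝ} (hs : (d : ℝ) < s) : Jint d s < ⊤ := by
  have h : Integrable (fun x : E => (1 + ‖x‖) ^ (-s)) :=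
    integrable_one_add_norm (by rw [finrank_euclideanSpace_fin]; exact hs)
  have h2 := h.hasFiniteIntegral
  rw [HasFiniteIntegral] at h2
  refine lt_of_le_of_lt (le_of_eq (lintegral_congr fun x => ?_)) h2
  rw [← Real.enorm_eq_ofReal (by positivity)]

lemma kTwo_measurable {γ : ℝ} : Measurable (kTwo d γ) := by
  unfold kTwo
  exact Measurable.ite (measurableSet_lt measurable_const measurable_norm)
    (measurable_norm.pow_const _) measurable_const

lemma Skernel_measurable {a t : ℝ} : Measurable (Skernel d a t) := by
  unfold Skernel
  exact (((measurable_const.add (measurable_norm.pow_const 2)).pow_const _).const_mul _)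

lemma Skernel_nonneg {a t : ℝ} (ha : 0 ≤ a) (ξ : E) : 0 ≤ Skernel d a t ξ := by
  unfold Skernel
  have : (0:ℝ) ≤ (4 * a ^ 2 * t ^ 2 + ‖ξ‖ ^ 2) ^ (-(((d : ℝ) + 1) / 2)) :=
    Real.rpow_nonneg (by positivity) _
  positivity

lemma kTwo_nnnorm_le_one {γ : ℝ} (hγd : γ ≤ (d:ℝ)) (x : E) :
    (‖kTwo d γ x‖₊ : ℝ≥0∞) ≤ 1 := by
  unfold kTwo
  by_cases h1 : 1 < ‖x‖
  · rw [if_pos h1, ennnorm_eq_ofReal_aux (Real.rpow_nonneg (by positivity) _)]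
    refine le_trans (ENNReal.ofReal_le_ofReal ?_) (le_of_eq ENNReal.ofReal_one)
    exact Real.rpow_le_one_of_one_le_of_nonpos h1.le (by linarith)
  · rw [if_neg h1]; simp

lemma kTwo_rpow_le {γ : ℝ} (hγd : γ < (d:ℝ)) {u : ℝ} (hu : 0 < u) (x : E) :
    (‖kTwo d γ x‖₊ : ℝ≥0∞) ^ u ≤
      ENNReal.ofReal (2 ^ (((d:ℝ) - γ) * u)) *
        ENNReal.ofReal ((1 + ‖x‖) ^ (-(((d:ℝ) - γ) * u))) := by
  set s : ℝ := ((d:ℝ) - γ) * u with hsdef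
  have hs : 0 < s := by
    apply mul_pos _ hu; linarith
  unfold kTwo
  by_cases h1 : 1 < ‖x‖
  · have hx0 : (0:ℝ) < ‖x‖ := lt_trans one_pos h1
    rw [if_pos h1, ennnorm_eq_ofReal_aux (Real.rpow_nonneg (by positivity) _),
      ENNReal.ofReal_rpow_of_nonneg (Real.rpow_nonneg (by positivity) _) hu.le,
      ← Real.rpow_mul hx0.le, ← ENNReal.ofReal_mul (by positivity)]
    apply ENNReal.ofReal_le_ofReal
    have hbase : (1 + ‖x‖) / 2 ≤ ‖x‖ := by linarith
    have hbpos : (0:ℝ) < (1 + ‖x‖) / 2 := by positivity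
    have hstep : ‖x‖ ^ ((γ - (d:ℝ)) * u) ≤ ((1 + ‖x‖) / 2) ^ (-s) := by
      have : (γ - (d:ℝ)) * u = -s := by rw [hsdef]; ring
      rw [this]
      exact Real.rpow_le_rpow_of_nonpos hbpos hbase (by linarith)
    refine le_trans hstep (le_of_eq ?_)
    rw [div_eq_mul_inv, Real.mul_rpow (by positivity) (by positivity),
      Real.inv_rpow (by norm_num), ← Real.rpow_neg (by norm_num), neg_neg, mul_comm]
  · rw [if_neg h1]
    simp only [nnnorm_zero, ENNReal.coe_zero, ENNReal.zero_rpow_of_pos hu]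
    exact zero_le

lemma sq_norm_bound (x : E) :
    ((1:ℝ) + ‖x‖ ^ 2) ^ (-(((d:ℝ) + 1) / 2)) ≤
      2 ^ (((d:ℝ) + 1) / 2) * (1 + ‖x‖) ^ (-((d:ℝ) + 1)) := by
  set s : ℝ := ((d:ℝ) + 1) / 2 with hsdef
  have hs : 0 < s := by positivity
  have hb : (1 + ‖x‖) ^ 2 / 2 ≤ 1 + ‖x‖ ^ 2 := by nlinarith [norm_nonneg x, sq_nonneg (1 - ‖x‖)]
  have hbpos : (0:ℝ) < (1 + ‖x‖) ^ 2 / 2 := by positivity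
  have h1 : ((1:ℝ) + ‖x‖ ^ 2) ^ (-s) ≤ ((1 + ‖x‖) ^ 2 / 2) ^ (-s) :=
    Real.rpow_le_rpow_of_nonpos hbpos hb (by linarith)
  refine le_trans h1 (le_of_eq ?_)
  rw [div_eq_mul_inv, Real.mul_rpow (by positivity) (by positivity),
    Real.inv_rpow (by norm_num), ← Real.rpow_neg (by norm_num), neg_neg,
    ← Real.rpow_natCast (1 + ‖x‖) 2, ← Real.rpow_mul (by positivity)]
  rw [mul_comm]
  congr 2
  rw [hsdef]; push_cast; ring

lemma Skernel_lint_le {a t : ℝ} (ha : 0 ≤ a) :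
    ∫⁻ ξ : E, (‖Skernel d a t ξ‖₊ : ℝ≥0∞) ≤ CSbound d := by
  by_cases hat : a * |t| = 0
  · have : ∀ ξ : E, Skernel d a t ξ = 0 := fun ξ => by unfold Skernel; rw [hat, zero_mul]
    simp only [this, nnnorm_zero, ENNReal.coe_zero, lintegral_zero]
    exact zero_le
  · have hapos : 0 < a := lt_of_le_of_ne ha (by rintro rfl; simp at hat)
    have htpos : 0 < |t| := by
      rcases lt_or_eq_of_le (abs_nonneg t) with h | h
      · exact h
      · exact absurd (by rw [← h, mul_zero]) hat
    set c : ℝ := 2 * (a * |t|) with hcdef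
    have hc : 0 < c := by positivity
    set s : ℝ := ((d:ℝ) + 1) / 2 with hsdef
    -- the function as ofReal
    set g : E → ℝ≥0∞ := fun ξ => ENNReal.ofReal (Skernel d a t ξ) with hgdef
    have hgmeas : Measurable g := ENNReal.measurable_ofReal.comp Skernel_measurable
    have hnorm : ∀ ξ : E, (‖Skernel d a t ξ‖₊ : ℝ≥0∞) = g ξ := fun ξ =>
      ennnorm_eq_ofReal_aux (Skernel_nonneg ha ξ)
    -- change of variables
    have hmap : Measure.map (fun x : E => c • x) volume
        = ENNReal.ofReal |((c : ℝ) ^ finrank ℝ E)⁻¹| • volume :=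
      Measure.map_addHaar_smul volume hc.ne'
    have h1 : ∫⁻ x : E, g (c • x) = ENNReal.ofReal ((c ^ d)⁻¹) * ∫⁻ x, g x := by
      have hsm : Measurable fun x : E => c • x := measurable_const_smul c
      rw [← lintegral_map hgmeas hsm, hmap, lintegral_smul_measure,
        finrank_euclideanSpace_fin, abs_of_pos (by positivity), smul_eq_mul]
    have h2 : ∫⁻ x : E, g x = ENNReal.ofReal (c ^ d) * ∫⁻ x : E, g (c • x) := by
      rw [h1, ← mul_assoc, ← ENNReal.ofReal_mul (by positivity), mul_inv_cancel₀ (by positivity),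
        ENNReal.ofReal_one, one_mul]
    -- pointwise evaluation of g (c • x)
    have h3 : ∀ x : E, g (c • x)
        = ENNReal.ofReal ((1/2) * c ^ (-(d:ℝ))) * ENNReal.ofReal ((1 + ‖x‖^2) ^ (-s)) := by
      intro x
      rw [hgdef]
      simp only
      unfold Skernel
      rw [norm_smul, Real.norm_eq_abs, abs_of_pos hc]
      have hbase : 4 * a ^ 2 * t ^ 2 + (c * ‖x‖) ^ 2 = c ^ 2 * (1 + ‖x‖ ^ 2) := by
        rw [hcdef]; rw [← sq_abs t]; ring
      rw [hbase, Real.mul_rpow (by positivity) (by positivity)]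
      have hc2 : ((c:ℝ) ^ 2) ^ (-s) = c ^ (-(2:ℝ) * s) := by
        rw [← Real.rpow_natCast c 2, ← Real.rpow_mul hc.le]
        norm_num
      have hexp : (-(2:ℝ) * s) = -1 + -(d:ℝ) := by rw [hsdef]; push_cast; ring
      have hfact : a * |t| * ((c:ℝ)^2) ^ (-s) = (1/2) * c ^ (-(d:ℝ)) := by
        rw [hc2, hexp, Real.rpow_add hc, Real.rpow_neg_one]
        rw [hcdef]
        field_simp
      rw [← mul_assoc, hfact, ENNReal.ofReal_mul (by positivity)]
    -- assemble
    calc ∫⁻ ξ : E, (‖Skernel d a t ξ‖₊ : ℝ≥0∞) = ∫⁻ x : E, g x := lintegral_congr hnorm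
      _ = ENNReal.ofReal (c ^ d) * ∫⁻ x : E, g (c • x) := h2
      _ = ENNReal.ofReal (c ^ d) * (ENNReal.ofReal ((1/2) * c ^ (-(d:ℝ))) *
            ∫⁻ x : E, ENNReal.ofReal ((1 + ‖x‖^2) ^ (-s))) := by
          rw [lintegral_congr h3, lintegral_const_mul' _ _ ENNReal.ofReal_ne_top]
      _ = ENNReal.ofReal (c ^ d * ((1/2) * c ^ (-(d:ℝ)))) *
            ∫⁻ x : E, ENNReal.ofReal ((1 + ‖x‖^2) ^ (-s)) := by
          rw [← mul_assoc, ← ENNReal.ofReal_mul (by positivity)]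
      _ ≤ 1 * ∫⁻ x : E, ENNReal.ofReal ((1 + ‖x‖^2) ^ (-s)) := by
          apply mul_le_mul_left
          have heq : (c:ℝ) ^ d * (1/2 * c ^ (-(d:ℝ))) = 1/2 := by
            rw [← Real.rpow_natCast c d,
              show c ^ (d:ℝ) * (1/2 * c ^ (-(d:ℝ))) = 1/2 * (c ^ (d:ℝ) * c ^ (-(d:ℝ))) from by ring,
              ← Real.rpow_add hc]
            norm_num
          rw [heq]
          exact ENNReal.ofReal_le_one.mpr (by norm_num)
      _ ≤ CSbound d := by
          rw [one_mul, CSbound]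
          have : ∀ x : E, ENNReal.ofReal ((1 + ‖x‖^2) ^ (-s)) ≤
              ENNReal.ofReal (2 ^ s) * ENNReal.ofReal ((1 + ‖x‖) ^ (-((d:ℝ)+1))) := by
            intro x
            rw [← ENNReal.ofReal_mul (by positivity)]
            exact ENNReal.ofReal_le_ofReal (sq_norm_bound x)
          refine le_trans (lintegral_mono this) (le_of_eq ?_)
          rw [lintegral_const_mul' _ _ ENNReal.ofReal_ne_top, Jint]

lemma kappaTwo_measurable {γ a t : ℝ} : Measurable (kappaTwo d γ a t) := by
  unfold kappaTwo
  split
  · exact kTwo_measurable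
  · unfold convR
    have hm : Measurable fun q : E × E => kTwo d γ q.2 * Skernel d a t (q.1 - q.2) :=
      (kTwo_measurable.comp measurable_snd).mul
        (Skernel_measurable.comp (measurable_fst.sub measurable_snd))
    exact hm.stronglyMeasurable.integral_prod_right'.measurable

lemma kappaTwo_nnnorm_le {γ a t : ℝ} (hγd : γ ≤ (d:ℝ)) (ha : 0 ≤ a) (x : E) :
    (‖kappaTwo d γ a t x‖₊ : ℝ≥0∞) ≤ 1 + CSbound d := by
  unfold kappaTwo
  split
  · exact le_trans (kTwo_nnnorm_le_one hγd x) le_self_add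
  · unfold convR
    refine le_trans (ennnorm_integral_le_aux _) ?_
    have h1 : ∀ y : E, (‖kTwo d γ y * Skernel d a t (x - y)‖₊ : ℝ≥0∞)
        ≤ (‖Skernel d a t (x - y)‖₊ : ℝ≥0∞) := by
      intro y
      rw [nnnorm_mul, ENNReal.coe_mul]
      exact mul_le_mul' (kTwo_nnnorm_le_one hγd y) le_rfl |>.trans (by rw [one_mul])
    refine le_trans (lintegral_mono h1) ?_
    have hS : Measurable fun y : E => (‖Skernel d a t y‖₊ : ℝ≥0∞) :=
      Skernel_measurable.nnnorm.coe_nnreal_ennreal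
    rw [(Measure.measurePreserving_sub_left volume x).lintegral_comp hS]
    exact le_trans (Skernel_lint_le ha) le_add_self

lemma kappaTwo_rpow_lint_le {γ a t : ℝ} (hγd : γ < (d:ℝ)) (ha : 0 ≤ a) {u : ℝ} (hu : 1 ≤ u) :
    ∫⁻ x, (‖kappaTwo d γ a t x‖₊ : ℝ≥0∞) ^ u ≤
      (1 + (CSbound d) ^ u) *
        (ENNReal.ofReal (2 ^ (((d:ℝ) - γ) * u)) * Jint d (((d:ℝ) - γ) * u)) := by
  have hu0 : (0:ℝ) < u := lt_of_lt_of_le one_pos hu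
  have hK2 : ∫⁻ x, (‖kTwo d γ x‖₊ : ℝ≥0∞) ^ u ≤
      ENNReal.ofReal (2 ^ (((d:ℝ) - γ) * u)) * Jint d (((d:ℝ) - γ) * u) := by
    refine le_trans (lintegral_mono fun x => kTwo_rpow_le hγd hu0 x) ?_
    rw [lintegral_const_mul' _ _ ENNReal.ofReal_ne_top, Jint]
  set CK : ℝ≥0∞ := ENNReal.ofReal (2 ^ (((d:ℝ) - γ) * u)) * Jint d (((d:ℝ) - γ) * u) with hCK
  unfold kappaTwo
  split
  · calc ∫⁻ x, (‖kTwo d γ x‖₊ : ℝ≥0∞) ^ u ≤ CK := hK2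
      _ = 1 * CK := (one_mul _).symm
      _ ≤ (1 + (CSbound d) ^ u) * CK := mul_le_mul_left le_self_add _
  · -- a ≠ 0 : κ₂ = k₂ ∗ S, bound by Young's inequality with L¹ factor S
    have hK2m : Measurable fun y : E => (‖kTwo d γ y‖₊ : ℝ≥0∞) :=
      kTwo_measurable.nnnorm.coe_nnreal_ennreal
    have hSm : Measurable fun y : E => (‖Skernel d a t y‖₊ : ℝ≥0∞) :=
      Skernel_measurable.nnnorm.coe_nnreal_ennreal
    have hpt : ∀ x : E, (‖convR (kTwo d γ) (Skernel d a t) x‖₊ : ℝ≥0∞)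
        ≤ ∫⁻ y, (‖Skernel d a t y‖₊ : ℝ≥0∞) * (‖kTwo d γ (x - y)‖₊ : ℝ≥0∞) := by
      intro x
      unfold convR
      refine le_trans (ennnorm_integral_le_aux _) ?_
      refine le_trans (le_of_eq (lintegral_congr fun y => ?_))
        (le_of_eq (lintegral_conv_comm hK2m hSm x))
      rw [nnnorm_mul, ENNReal.coe_mul]
    calc ∫⁻ x, (‖convR (kTwo d γ) (Skernel d a t) x‖₊ : ℝ≥0∞) ^ u
        ≤ ∫⁻ x, (∫⁻ y, (‖Skernel d a t y‖₊ : ℝ≥0∞) * (‖kTwo d γ (x - y)‖₊ : ℝ≥0∞)) ^ u :=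
          lintegral_mono fun x => ENNReal.rpow_le_rpow (hpt x) hu0.le
      _ ≤ (∫⁻ y, (‖Skernel d a t y‖₊ : ℝ≥0∞)) ^ u * ∫⁻ x, (‖kTwo d γ x‖₊ : ℝ≥0∞) ^ u :=
          young_one hSm hK2m hu
      _ ≤ (CSbound d) ^ u * CK := by
          exact mul_le_mul' (ENNReal.rpow_le_rpow (Skernel_lint_le ha) hu0.le) hK2
      _ ≤ (1 + (CSbound d) ^ u) * CK := mul_le_mul_left le_add_self _

lemma CSbound_lt_top : CSbound d < ⊤ := by
  refine ENNReal.mul_lt_top ENNReal.ofReal_lt_top (Jint_lt_top ?_)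
  linarith

lemma stepB {W H : E → ℝ≥0∞} (hW : Measurable W) (hH : Measurable H) {r : ℝ} (hr : 1 ≤ r) :
    (∫⁻ x, (∫⁻ y, W y * H (x - y)) ^ r) ^ (1/r) ≤ (∫⁻ y, W y) * (∫⁻ x, H x ^ r) ^ (1/r) := by
  have hr0 : (0:ℝ) < r := lt_of_lt_of_le one_pos hr
  refine le_trans (ENNReal.rpow_le_rpow (young_one hW hH hr) (by positivity)) (le_of_eq ?_)
  rw [ENNReal.mul_rpow_of_nonneg _ _ (by positivity), ← ENNReal.rpow_mul,
    mul_one_div_cancel hr0.ne', ENNReal.rpow_one]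

lemma stepA {κ : E → ℝ} (f g h : E → ℂ) (x : E) :
    (‖convC (fun y => (κ y : ℂ) * convC f (fun z => (starRingEnd ℂ) (g z)) y) h x‖₊ : ℝ≥0∞)
      ≤ ∫⁻ y, ((‖κ y‖₊ : ℝ≥0∞) * ∫⁻ z, (‖f z‖₊ : ℝ≥0∞) * (‖g (y - z)‖₊ : ℝ≥0∞)) *
          (‖h (x - y)‖₊ : ℝ≥0∞) := by
  unfold convC
  refine le_trans (ennnorm_integral_le_aux _) (lintegral_mono fun y => ?_)
  rw [nnnorm_mul, nnnorm_mul, ENNReal.coe_mul, ENNReal.coe_mul]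
  refine mul_le_mul' (mul_le_mul' (le_of_eq ?_) ?_) le_rfl
  · rw [Complex.nnnorm_real]
  · refine le_trans (ennnorm_integral_le_aux _) (le_of_eq ?_)
    refine lintegral_congr fun z => ?_
    rw [nnnorm_mul, ENNReal.coe_mul, RCLike.nnnorm_conj]

lemma convC_congr {f f' g g' : E → ℂ} (hf : f =ᵐ[volume] f') (hg : g =ᵐ[volume] g') :
    convC f g = convC f' g' := by
  funext x
  refine integral_congr_ae (hf.mul ?_)
  exact ((Measure.measurePreserving_sub_left volume x).quasiMeasurePreserving).ae_eq_comp hg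

end Helpers

/-- Trilinear estimates for the second piece of the Hartree-type trilinear operator:
for `1 ≤ p < 2` and `0 < γ < 2d(1/p - 1/2)`,
(i) `‖[κ₂ · (f ∗ ḡ)] ∗ h‖_{L^p} ≤ C ‖f‖_{L^p} ‖g‖_{L^p} ‖h‖_{L^p}` and
(ii) `‖[κ₂ · (f ∗ ḡ)] ∗ h‖_{L²} ≤ C ‖f‖_{L^p} ‖g‖_{L^p} ‖h‖_{L²}`,
with `C = C(d,γ,p)` independent of `a` and `t`. -/


theorem trilinear_far_piece_Lp_estimates (d : ℕ) (hd : 1 ≤ d) (p : ℝ)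
    (hp1 : 1 ≤ p) (hp2 : p < 2) (γ : ℝ) (hγ0 : 0 < γ)
    (hγ : γ < 2 * d * (1 / p - 1 / 2)) :
    ∃ C : ℝ, 0 < C ∧ ∀ a t : ℝ, 0 ≤ a →
      (∀ f g h : EuclideanSpace ℝ (Fin d) → ℂ,
        MemLp f (ENNReal.ofReal p) volume → MemLp g (ENNReal.ofReal p) volume →
        MemLp h (ENNReal.ofReal p) volume →
        eLpNorm
            (convC (fun x => (kappaTwo d γ a t x : ℂ) *
              convC f (fun y => (starRingEnd ℂ) (g y)) x) h)
            (ENNReal.ofReal p) volume ≤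
          ENNReal.ofReal C * eLpNorm f (ENNReal.ofReal p) volume *
            eLpNorm g (ENNReal.ofReal p) volume *
            eLpNorm h (ENNReal.ofReal p) volume) ∧
      (∀ f g h : EuclideanSpace ℝ (Fin d) → ℂ,
        MemLp f (ENNReal.ofReal p) volume → MemLp g (ENNReal.ofReal p) volume →
        MemLp h 2 volume →
        eLpNorm
            (convC (fun x => (kappaTwo d γ a t x : ℂ) *
              convC f (fun y => (starRingEnd ℂ) (g y)) x) h) 2 volume ≤
          ENNReal.ofReal C * eLpNorm f (ENNReal.ofReal p) volume *
            eLpNorm g (ENNReal.ofReal p) volume * eLpNorm h 2 volume) := by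
  have hp0 : (0:ℝ) < p := by linarith
  have hd0 : (0:ℝ) < d := by exact_mod_cast Nat.pos_of_ne_zero (by omega)
  have hpinv : 1/p ≤ 1 := by rw [div_le_one hp0]; linarith
  have hγd : γ < (d:ℝ) := by nlinarith
  -- the key bilinear bound, with a uniform constant Θ
  obtain ⟨Θ, hΘtop, hkey⟩ : ∃ Θ : ℝ≥0∞, Θ ≠ ⊤ ∧ ∀ a t : ℝ, 0 ≤ a →
      ∀ f g : EuclideanSpace ℝ (Fin d) → ℂ, Measurable f → Measurable g →
      (∫⁻ y, (‖kappaTwo d γ a t y‖₊ : ℝ≥0∞) *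
          ∫⁻ z, (‖f z‖₊ : ℝ≥0∞) * (‖g (y - z)‖₊ : ℝ≥0∞)) ≤
        Θ * ((∫⁻ x, (‖f x‖₊ : ℝ≥0∞) ^ p) ^ (1/p) *
          (∫⁻ x, (‖g x‖₊ : ℝ≥0∞) ^ p) ^ (1/p)) := by
    rcases eq_or_lt_of_le hp1 with hp1e | hp1l
    · -- p = 1
      subst hp1e
      refine ⟨1 + CSbound d, ?_, ?_⟩
      · exact (ENNReal.add_lt_top.mpr ⟨ENNReal.one_lt_top, CSbound_lt_top⟩).ne
      intro a t ha f g hf hg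
      have hF : Measurable fun x => (‖f x‖₊ : ℝ≥0∞) := hf.nnnorm.coe_nnreal_ennreal
      have hG : Measurable fun x => (‖g x‖₊ : ℝ≥0∞) := hg.nnnorm.coe_nnreal_ennreal
      have h1 : (∫⁻ y, (‖kappaTwo d γ a t y‖₊ : ℝ≥0∞) *
          ∫⁻ z, (‖f z‖₊ : ℝ≥0∞) * (‖g (y - z)‖₊ : ℝ≥0∞)) ≤
          ∫⁻ y, (1 + CSbound d) * ∫⁻ z, (‖f z‖₊ : ℝ≥0∞) * (‖g (y - z)‖₊ : ℝ≥0∞) :=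
        lintegral_mono fun y => mul_le_mul_left (kappaTwo_nnnorm_le hγd.le ha y) _
      refine le_trans h1 (le_of_eq ?_)
      rw [lintegral_const_mul' _ _
        (ENNReal.add_lt_top.mpr ⟨ENNReal.one_lt_top, CSbound_lt_top⟩).ne,
        lintegral_lintegral_conv hF hG]
      simp [ENNReal.rpow_one]
    · -- 1 < p
      have h2p : (0:ℝ) < 2 - 2/p := by
        have : 2/p < 2 := by rw [div_lt_iff₀ hp0]; nlinarith
        linarith
      set u : ℝ := (2 - 2/p)⁻¹ with hu
      have hu1 : (1:ℝ) ≤ u := by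
        rw [hu]
        rw [one_le_inv_iff₀]
        constructor
        · exact h2p
        · have : (1:ℝ) ≤ 2/p := by rw [le_div_iff₀ hp0]; linarith
          linarith
      have hu0 : (0:ℝ) < u := lt_of_lt_of_le one_pos hu1
      have hdu : (d:ℝ) < ((d:ℝ) - γ) * u := by
        rw [hu, ← div_eq_mul_inv, lt_div_iff₀ h2p]
        have h' : 2*(d:ℝ)*(1/p - 1/2) = 2*d/p - d := by ring
        have h'' : (d:ℝ)*(2 - 2/p) = 2*d - 2*d/p := by ring
        rw [h'']
        rw [h'] at hγ
        linarith
      set CKtot : ℝ≥0∞ := (1 + (CSbound d) ^ u) *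
        (ENNReal.ofReal (2 ^ (((d:ℝ) - γ) * u)) * Jint d (((d:ℝ) - γ) * u)) with hCKtot
      have hCKtop : CKtot ≠ ⊤ := by
        rw [hCKtot]
        apply ENNReal.mul_ne_top
        · apply ENNReal.add_ne_top.mpr
          exact ⟨ENNReal.one_ne_top, ENNReal.rpow_ne_top_of_nonneg hu0.le CSbound_lt_top.ne⟩
        · exact ENNReal.mul_ne_top ENNReal.ofReal_ne_top (Jint_lt_top hdu).ne
      refine ⟨CKtot ^ (2 - 2/p), ENNReal.rpow_ne_top_of_nonneg h2p.le hCKtop, ?_⟩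
      intro a t ha f g hf hg
      have hF : Measurable fun x => (‖f x‖₊ : ℝ≥0∞) := hf.nnnorm.coe_nnreal_ennreal
      have hG : Measurable fun x => (‖g x‖₊ : ℝ≥0∞) := hg.nnnorm.coe_nnreal_ennreal
      have hκm : Measurable fun y => (‖kappaTwo d γ a t y‖₊ : ℝ≥0∞) :=
        kappaTwo_measurable.nnnorm.coe_nnreal_ennreal
      refine le_trans (trilinear_holder hκm hF hG hp1l hp2) ?_
      apply mul_le_mul_left
      apply ENNReal.rpow_le_rpow _ h2p.le
      exact kappaTwo_rpow_lint_le hγd ha hu1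
  -- conversion of eLpNorms
  have hP0 : (ENNReal.ofReal p) ≠ 0 := by
    simp only [ne_eq, ENNReal.ofReal_eq_zero, not_le]; linarith
  have hPtop : (ENNReal.ofReal p) ≠ ⊤ := ENNReal.ofReal_ne_top
  have hPto : (ENNReal.ofReal p).toReal = p := ENNReal.toReal_ofReal hp0.le
  have hsP : ∀ φ : EuclideanSpace ℝ (Fin d) → ℂ,
      eLpNorm φ (ENNReal.ofReal p) volume = (∫⁻ x, (‖φ x‖₊ : ℝ≥0∞) ^ p) ^ (1/p) := by
    intro φ
    rw [eLpNorm_eq_lintegral_rpow_nnnorm_aux hP0 hPtop, hPto]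
  -- the common estimate
  have main : ∀ a t : ℝ, 0 ≤ a → ∀ (r : ℝ≥0∞), r ≠ 0 → r ≠ ⊤ → 1 ≤ r.toReal →
      ∀ f g h : EuclideanSpace ℝ (Fin d) → ℂ, AEStronglyMeasurable f volume →
        AEStronglyMeasurable g volume → AEStronglyMeasurable h volume →
      eLpNorm (convC (fun x => (kappaTwo d γ a t x : ℂ) *
          convC f (fun y => (starRingEnd ℂ) (g y)) x) h) r volume ≤
        ENNReal.ofReal (Θ.toReal + 1) * eLpNorm f (ENNReal.ofReal p) volume *
          eLpNorm g (ENNReal.ofReal p) volume * eLpNorm h r volume := by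
    intro a t ha r hr0 hrtop hr1 f g h hf hg hh
    have hrt0 : (0:ℝ) < r.toReal := by linarith
    -- measurable representatives
    set f' := hf.mk f with hf'def
    have hfm : Measurable f' := hf.stronglyMeasurable_mk.measurable
    have hfe : f =ᵐ[volume] f' := hf.ae_eq_mk
    set g' := hg.mk g with hg'def
    have hgm : Measurable g' := hg.stronglyMeasurable_mk.measurable
    have hge : g =ᵐ[volume] g' := hg.ae_eq_mk
    set h' := hh.mk h with hh'def
    have hhm : Measurable h' := hh.stronglyMeasurable_mk.measurable
    have hhe : h =ᵐ[volume] h' := hh.ae_eq_mk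
    have hconv1 : convC f (fun y => (starRingEnd ℂ) (g y))
        = convC f' (fun y => (starRingEnd ℂ) (g' y)) :=
      convC_congr hfe (hge.fun_comp (starRingEnd ℂ))
    have hLHS : convC (fun x => (kappaTwo d γ a t x : ℂ) *
          convC f (fun y => (starRingEnd ℂ) (g y)) x) h
        = convC (fun x => (kappaTwo d γ a t x : ℂ) *
          convC f' (fun y => (starRingEnd ℂ) (g' y)) x) h' := by
      rw [hconv1]
      exact convC_congr (Filter.EventuallyEq.refl _ _) hhe
    rw [hLHS, eLpNorm_congr_ae hfe, eLpNorm_congr_ae hge, eLpNorm_congr_ae hhe]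
    -- notation
    set F := fun x => (‖f' x‖₊ : ℝ≥0∞) with hF
    set G := fun x => (‖g' x‖₊ : ℝ≥0∞) with hG
    set H := fun x => (‖h' x‖₊ : ℝ≥0∞) with hH
    have hFm : Measurable F := hfm.nnnorm.coe_nnreal_ennreal
    have hGm : Measurable G := hgm.nnnorm.coe_nnreal_ennreal
    have hHm : Measurable H := hhm.nnnorm.coe_nnreal_ennreal
    set W := fun y => (‖kappaTwo d γ a t y‖₊ : ℝ≥0∞) * ∫⁻ z, F z * G (y - z) with hW
    have hWm : Measurable W := by
      apply (kappaTwo_measurable.nnnorm.coe_nnreal_ennreal).mul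
      apply Measurable.lintegral_prod_right' (f := fun q :
        (EuclideanSpace ℝ (Fin d)) × (EuclideanSpace ℝ (Fin d)) => F q.2 * G (q.1 - q.2))
      exact (hFm.comp measurable_snd).mul (hGm.comp (measurable_fst.sub measurable_snd))
    have hsr : eLpNorm (convC (fun x => (kappaTwo d γ a t x : ℂ) *
          convC f' (fun y => (starRingEnd ℂ) (g' y)) x) h') r volume
        = (∫⁻ x, (‖convC (fun x => (kappaTwo d γ a t x : ℂ) *
            convC f' (fun y => (starRingEnd ℂ) (g' y)) x) h' x‖₊ : ℝ≥0∞) ^ r.toReal)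
          ^ (1/r.toReal) :=
      eLpNorm_eq_lintegral_rpow_nnnorm_aux hr0 hrtop
    rw [hsr, hsP, hsP, eLpNorm_eq_lintegral_rpow_nnnorm_aux hr0 hrtop]
    calc (∫⁻ x, (‖convC (fun x => (kappaTwo d γ a t x : ℂ) *
            convC f' (fun y => (starRingEnd ℂ) (g' y)) x) h' x‖₊ : ℝ≥0∞) ^ r.toReal)
          ^ (1/r.toReal)
        ≤ (∫⁻ x, (∫⁻ y, W y * H (x - y)) ^ r.toReal) ^ (1/r.toReal) := by
          refine ENNReal.rpow_le_rpow (lintegral_mono fun x => ?_) (by positivity)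
          exact ENNReal.rpow_le_rpow (stepA f' g' h' x) hrt0.le
      _ ≤ (∫⁻ y, W y) * (∫⁻ x, H x ^ r.toReal) ^ (1/r.toReal) := stepB hWm hHm hr1
      _ ≤ (Θ * ((∫⁻ x, F x ^ p) ^ (1/p) * (∫⁻ x, G x ^ p) ^ (1/p))) *
            (∫⁻ x, H x ^ r.toReal) ^ (1/r.toReal) :=
          mul_le_mul_left (hkey a t ha f' g' hfm hgm) _
      _ ≤ (ENNReal.ofReal (Θ.toReal + 1) *
            ((∫⁻ x, F x ^ p) ^ (1/p) * (∫⁻ x, G x ^ p) ^ (1/p))) *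
            (∫⁻ x, H x ^ r.toReal) ^ (1/r.toReal) := by
          apply mul_le_mul_left
          apply mul_le_mul_left
          conv_lhs => rw [← ENNReal.ofReal_toReal hΘtop]
          exact ENNReal.ofReal_le_ofReal (by linarith [ENNReal.toReal_nonneg (a := Θ)])
      _ = ENNReal.ofReal (Θ.toReal + 1) * (∫⁻ x, F x ^ p) ^ (1/p) *
            (∫⁻ x, G x ^ p) ^ (1/p) * (∫⁻ x, H x ^ r.toReal) ^ (1/r.toReal) := by
          ring
  refine ⟨Θ.toReal + 1, by positivity, fun a t ha => ⟨?_, ?_⟩⟩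
  · intro f g h hf hg hh
    exact main a t ha (ENNReal.ofReal p) hP0 hPtop (by rw [hPto]; exact hp1) f g h
      hf.aestronglyMeasurable hg.aestronglyMeasurable hh.aestronglyMeasurable
  · intro f g h hf hg hh
    refine main a t ha 2 (by norm_num) (by norm_num) ?_ f g h
      hf.aestronglyMeasurable hg.aestronglyMeasurable hh.aestronglyMeasurable
    rw [ENNReal.toReal_ofNat]
    norm_num
end

section
/- Let 0 < γ < 1. There exist f, g ∈ L²(ℝ) such that the convolution H = f ∗ ḡ (where ḡ is the complex conjugate of g) is a real-valued continuous function with compact support satisfying ∫_ℝ |x|^{γ−1} H(x) dx = 0 and ∫_{|x|≤1} |x|^{γ−1} H(x) dx > 0. Consequently, there is no constant c > 0 such that |F(k₁ · (f ∗ ḡ))(ξ)| ≤ c |F(k · (f ∗ ḡ))(ξ)| holds for all ξ ∈ ℝ and all f, g ∈ L²(ℝ), where k(x) = |x|^{γ−1}, k₁ = k · χ_{[−1,1]}, and F is the Fourier transform. -/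
open MeasureTheory Real FourierTransform
open scoped ENNReal

noncomputable def tentFn : ℝ → ℝ := fun x => max (1/2 - |x|) 0

lemma tent_cont : Continuous tentFn := (continuous_const.sub continuous_abs).max continuous_const
lemma tent_nonneg (x : ℝ) : 0 ≤ tentFn x := le_max_right _ _
lemma tent_zero {x : ℝ} (hx : 1/2 ≤ |x|) : tentFn x = 0 := max_eq_right (by simp [tentFn]; linarith)
lemma tent_pos {x : ℝ} (hx : |x| < 1/2) : 0 < tentFn x := lt_max_of_lt_left (by linarith)
lemma tent_hcs : HasCompactSupport tentFn :=
  HasCompactSupport.intro (isCompact_Icc (a := (-1/2 : ℝ)) (b := 1/2)) (fun x hx => by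
    apply tent_zero
    by_contra h
    push_neg at h
    exact hx ⟨by linarith [abs_lt.mp h |>.1], (abs_lt.mp h).2.le⟩)

noncomputable def H0 : ℝ → ℝ := fun x => ∫ y, tentFn y * tentFn (x - y)

lemma H0_eq_conv : H0 = convolution tentFn tentFn (ContinuousLinearMap.mul ℝ ℝ) volume := rfl

lemma H0_cont : Continuous H0 := by
  rw [H0_eq_conv]
  exact tent_hcs.continuous_convolution_right _ (tent_cont.locallyIntegrable) tent_cont

lemma H0_hcs : HasCompactSupport H0 := by
  rw [H0_eq_conv]; exact tent_hcs.convolution _ tent_hcs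

lemma H0_nonneg (x : ℝ) : 0 ≤ H0 x :=
  integral_nonneg fun y => mul_nonneg (tent_nonneg y) (tent_nonneg _)

lemma H0_zero {x : ℝ} (hx : 1 ≤ |x|) : H0 x = 0 := by
  have : ∀ y : ℝ, tentFn y * tentFn (x - y) = 0 := by
    intro y
    rcases le_or_gt (1/2) (|y|) with h | h
    · rw [tent_zero h, zero_mul]
    · rw [tent_zero (x := x - y) (by
        have := abs_sub_abs_le_abs_sub x y
        linarith), mul_zero]
  simp [H0, this]

lemma tent_sq_integrable (c : ℝ) : Integrable (fun y => tentFn y * tentFn (c - y)) := by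
  apply Continuous.integrable_of_hasCompactSupport
  · exact tent_cont.mul (tent_cont.comp (continuous_const.sub continuous_id))
  · exact tent_hcs.mul_right

lemma H0_pos : 0 < H0 0 := by
  rw [H0, integral_pos_iff_support_of_nonneg_ae
    (Filter.Eventually.of_forall fun y => mul_nonneg (tent_nonneg y) (tent_nonneg _))
    (tent_sq_integrable 0)]
  have hsub : Set.Ioo (-(1/2) : ℝ) (1/2) ⊆ Function.support fun y => tentFn y * tentFn (0 - y) := by
    intro y hy
    have h1 : |y| < 1/2 := abs_lt.mpr ⟨hy.1, hy.2⟩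
    have h2 : |0 - y| < 1/2 := by rw [zero_sub, abs_neg]; exact h1
    exact ne_of_gt (mul_pos (tent_pos h1) (tent_pos h2))
  calc (0 : ℝ≥0∞) < volume (Set.Ioo (-(1/2) : ℝ) (1/2)) := by rw [Real.volume_Ioo]; norm_num
    _ ≤ _ := measure_mono hsub

section Gamma
variable {γ : ℝ} (hγ0 : 0 < γ) (hγ1 : γ < 1)

lemma k_meas_aux (F : ℝ → ℝ) (hF : Measurable F) :
    AEStronglyMeasurable (fun x : ℝ => |x| ^ (γ - 1) * F x) volume := by
  have h0 : ∀ᵐ x : ℝ, x ≠ 0 := by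
    rw [ae_iff]
    have : {x : ℝ | ¬x ≠ 0} = {0} := by ext x; simp
    rw [this]
    exact measure_singleton 0
  refine AEStronglyMeasurable.congr
    (f := fun x => Real.exp (Real.log |x| * (γ - 1)) * F x) ?_ ?_
  · exact (((continuous_abs.measurable.log).mul_const (γ - 1)).exp.mul hF).aestronglyMeasurable
  · filter_upwards [h0] with x hx
    rw [Real.rpow_def_of_pos (abs_pos.mpr hx)]

include hγ0 in
lemma k_integrableOn : IntegrableOn (fun x : ℝ => |x| ^ (γ - 1)) (Set.Icc (-1 : ℝ) 1) volume := by
  have hγ1' : (-1 : ℝ) < γ - 1 := by linarith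
  have hk01 : IntervalIntegrable (fun x : ℝ => |x| ^ (γ - 1)) volume 0 1 := by
    have h := intervalIntegral.intervalIntegrable_rpow' (r := γ - 1) hγ1' (a := 0) (b := 1)
    rw [intervalIntegrable_iff] at h ⊢
    refine h.congr_fun ?_ measurableSet_uIoc
    intro x hx
    rw [Set.uIoc_of_le zero_le_one] at hx
    simp only []
    rw [abs_of_pos hx.1]
  have hkneg : IntervalIntegrable (fun x : ℝ => |x| ^ (γ - 1)) volume (-1) 0 := by
    rw [IntervalIntegrable.iff_comp_neg]
    simp only [abs_neg, neg_neg, neg_zero]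
    exact hk01.symm
  rw [← intervalIntegrable_iff_integrableOn_Icc_of_le (by norm_num : (-1:ℝ) ≤ 1)]
  exact hkneg.trans hk01

end Gamma

section Gamma2
variable {γ : ℝ}

lemma hknn (x : ℝ) : 0 ≤ |x| ^ (γ - 1) := Real.rpow_nonneg (abs_nonneg x) _

lemma hkpos {x : ℝ} (hx : x ≠ 0) : 0 < |x| ^ (γ - 1) := Real.rpow_pos_of_pos (abs_pos.mpr hx) _

lemma intA (hγ0 : 0 < γ) : Integrable (fun x : ℝ => |x| ^ (γ - 1) * H0 x) := by
  obtain ⟨C, hC⟩ := H0_cont.bounded_above_of_compact_support H0_hcs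
  have hH0le : ∀ x, H0 x ≤ C := fun x => (le_abs_self _).trans (hC x)
  refine Integrable.mono' (g := (Set.Icc (-1:ℝ) 1).indicator fun x => C * |x| ^ (γ - 1))
    ((integrable_indicator_iff measurableSet_Icc).mpr ((k_integrableOn hγ0).const_mul C))
    (k_meas_aux H0 H0_cont.measurable)
    (Filter.Eventually.of_forall fun x => ?_)
  by_cases hx : x ∈ Set.Icc (-1:ℝ) 1
  · rw [Set.indicator_of_mem hx, Real.norm_eq_abs, abs_mul,
      abs_of_nonneg (hknn x), abs_of_nonneg (H0_nonneg x)]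
    calc |x| ^ (γ - 1) * H0 x ≤ |x| ^ (γ - 1) * C :=
          mul_le_mul_of_nonneg_left (hH0le x) (hknn x)
      _ = C * |x| ^ (γ - 1) := mul_comm _ _
  · have h1 : 1 ≤ |x| := by
      rw [Set.mem_Icc, ← abs_le, not_le] at hx
      exact hx.le
    rw [Set.indicator_of_notMem hx, H0_zero h1, mul_zero, norm_zero]

lemma intB (hγ1 : γ < 1) : Integrable (fun x : ℝ => |x| ^ (γ - 1) * H0 (x - 3)) := by
  obtain ⟨C, hC⟩ := H0_cont.bounded_above_of_compact_support H0_hcs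
  have hH0le : ∀ x, H0 x ≤ C := fun x => (le_abs_self _).trans (hC x)
  have hCnn : 0 ≤ C := le_trans (norm_nonneg _) (hC 0)
  refine Integrable.mono' (g := (Set.Icc (2:ℝ) 4).indicator fun _ => C)
    ((integrable_indicator_iff measurableSet_Icc).mpr
      (integrableOn_const measure_Icc_lt_top.ne))
    (k_meas_aux (fun x => H0 (x - 3))
      ((H0_cont.comp (continuous_id.sub continuous_const)).measurable))
    (Filter.Eventually.of_forall fun x => ?_)
  by_cases hx : x ∈ Set.Icc (2:ℝ) 4
  · rw [Set.indicator_of_mem hx]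
    rw [Set.mem_Icc] at hx
    have h1 : 1 ≤ |x| := le_trans (by linarith [hx.1]) (le_abs_self x)
    have hk1 : |x| ^ (γ - 1) ≤ 1 :=
      Real.rpow_le_one_of_one_le_of_nonpos h1 (by linarith)
    rw [Real.norm_eq_abs, abs_mul, abs_of_nonneg (hknn x), abs_of_nonneg (H0_nonneg _)]
    calc |x| ^ (γ - 1) * H0 (x - 3) ≤ 1 * C :=
          mul_le_mul hk1 (hH0le _) (H0_nonneg _) zero_le_one
      _ = C := one_mul C
  · have h1 : 1 ≤ |x - 3| := by
      rw [Set.mem_Icc] at hx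
      rcases not_and_or.mp hx with h | h
      · push_neg at h
        rw [abs_of_neg (by linarith)]; linarith
      · push_neg at h
        rw [abs_of_pos (by linarith)]; linarith
    rw [Set.indicator_of_notMem hx, H0_zero h1, mul_zero, norm_zero]

lemma H0ball : ∃ δ : ℝ, 0 < δ ∧ δ ≤ 1 ∧ ∀ x : ℝ, |x| < δ → 0 < H0 x := by
  obtain ⟨ε, hε, hball⟩ := Metric.isOpen_iff.mp (isOpen_lt continuous_const H0_cont) 0 H0_pos
  refine ⟨min ε 1, lt_min hε one_pos, min_le_right _ _, fun x hx => hball ?_⟩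
  rw [Metric.mem_ball, Real.dist_0_eq_abs]
  exact lt_of_lt_of_le hx (min_le_left _ _)

lemma Apos (hγ0 : 0 < γ) : 0 < ∫ x : ℝ, |x| ^ (γ - 1) * H0 x := by
  obtain ⟨δ, hδ0, hδ1, hδ⟩ := H0ball
  rw [integral_pos_iff_support_of_nonneg_ae
    (Filter.Eventually.of_forall fun x => mul_nonneg (hknn x) (H0_nonneg x)) (intA hγ0)]
  have hsub : Set.Ioo (-δ) δ \ {0} ⊆ Function.support fun x : ℝ => |x| ^ (γ - 1) * H0 x := by
    intro x hx
    have hxd : |x| < δ := abs_lt.mpr ⟨hx.1.1, hx.1.2⟩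
    have hx0 : x ≠ 0 := by simpa using hx.2
    exact ne_of_gt (mul_pos (hkpos hx0) (hδ x hxd))
  calc (0:ℝ≥0∞) < volume (Set.Ioo (-δ) δ \ {0}) := by
        rw [measure_diff_null (measure_singleton 0), Real.volume_Ioo]
        exact ENNReal.ofReal_pos.mpr (by linarith)
    _ ≤ _ := measure_mono hsub

lemma Bpos (hγ0 : 0 < γ) (hγ1 : γ < 1) : 0 < ∫ x : ℝ, |x| ^ (γ - 1) * H0 (x - 3) := by
  obtain ⟨δ, hδ0, hδ1, hδ⟩ := H0ball
  rw [integral_pos_iff_support_of_nonneg_ae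
    (Filter.Eventually.of_forall fun x => mul_nonneg (hknn x) (H0_nonneg _)) (intB hγ1)]
  have hsub : Set.Ioo (3-δ) (3+δ) ⊆
      Function.support fun x : ℝ => |x| ^ (γ - 1) * H0 (x - 3) := by
    intro x hx
    have hxd : |x - 3| < δ := abs_lt.mpr ⟨by linarith [hx.1], by linarith [hx.2]⟩
    have hx0 : x ≠ 0 := by have := hx.1; intro h; rw [h] at this; linarith
    exact ne_of_gt (mul_pos (hkpos hx0) (hδ _ hxd))
  calc (0:ℝ≥0∞) < volume (Set.Ioo (3-δ) (3+δ)) := by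
        rw [Real.volume_Ioo]
        exact ENNReal.ofReal_pos.mpr (by linarith)
    _ ≤ _ := measure_mono hsub

end Gamma2

/-- Convolution `f ∗ ḡ` on `ℝ`, where `ḡ` is the complex conjugate of `g`. -/
noncomputable def convConj (f g : ℝ → ℂ) : ℝ → ℂ :=
  fun x => ∫ y : ℝ, f y * (starRingEnd ℂ) (g (x - y))

/-- For `0 < γ < 1` there are `f, g ∈ L²(ℝ)` whose convolution `H = f ∗ ḡ` is a
real-valued continuous compactly supported function with `∫ |x|^{γ-1} H(x) dx = 0`
but `∫_{|x|≤1} |x|^{γ-1} H(x) dx > 0`; consequently no constant `c > 0` satisfies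
`|𝓕(k₁ (f∗ḡ))(ξ)| ≤ c |𝓕(k (f∗ḡ))(ξ)|` for all `ξ` and all `f, g ∈ L²`, where
`k(x) = |x|^{γ-1}` and `k₁ = k·χ_{[-1,1]}`. -/
theorem truncated_kernel_not_dominated (γ : ℝ) (hγ0 : 0 < γ) (hγ1 : γ < 1) :
    (∃ f g : ℝ → ℂ, MemLp f 2 (volume : Measure ℝ) ∧ MemLp g 2 (volume : Measure ℝ) ∧
      (∀ x : ℝ, (convConj f g x).im = 0) ∧
      Continuous (convConj f g) ∧
      HasCompactSupport (convConj f g) ∧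
      ∫ x : ℝ, |x| ^ (γ - 1) * (convConj f g x).re = 0 ∧
      0 < ∫ x in Set.Icc (-1 : ℝ) 1, |x| ^ (γ - 1) * (convConj f g x).re) ∧
    ¬∃ c : ℝ, 0 < c ∧ ∀ f g : ℝ → ℂ,
        MemLp f 2 (volume : Measure ℝ) → MemLp g 2 (volume : Measure ℝ) →
        ∀ ξ : ℝ,
          ‖𝓕 (fun x : ℝ => ((if |x| ≤ 1 then |x| ^ (γ - 1) else 0 : ℝ) : ℂ) *
              convConj f g x) ξ‖ ≤
            c * ‖𝓕 (fun x : ℝ => ((|x| ^ (γ - 1) : ℝ) : ℂ) * convConj f g x) ξ‖ := by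
  classical
  obtain ⟨δ, hδ0, hδ1, hδ⟩ := H0ball
  have hApos := Apos hγ0
  have hBpos := Bpos hγ0 hγ1
  set A : ℝ := ∫ x : ℝ, |x| ^ (γ - 1) * H0 x with hAdef
  set B : ℝ := ∫ x : ℝ, |x| ^ (γ - 1) * H0 (x - 3) with hBdef
  set a : ℝ := A / B with hadef
  set G : ℝ → ℝ := fun x => tentFn x - a * tentFn (x - 3) with hGdef
  set h : ℝ → ℝ := fun x => H0 x - a * H0 (x - 3) with hhdef
  have hGcont : Continuous G :=
    tent_cont.sub (continuous_const.mul (tent_cont.comp (continuous_id.sub continuous_const)))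
  have hGhcs : HasCompactSupport G := by
    refine HasCompactSupport.intro (isCompact_Icc (a := (-4:ℝ)) (b := 4)) (fun x hx => ?_)
    have h4 : 4 < |x| := by
      by_contra hcon
      push_neg at hcon
      exact hx (abs_le.mp hcon)
    have h1 : tentFn x = 0 := tent_zero (by linarith)
    have h2 : tentFn (x - 3) = 0 := tent_zero (by
      have := abs_sub_abs_le_abs_sub x (3 : ℝ)
      rw [abs_sub_comm] at this
      have h3 : |(3:ℝ)| = 3 := by norm_num
      rw [abs_sub_comm x 3]
      calc (1:ℝ)/2 ≤ 4 - 3 := by norm_num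
        _ ≤ |x| - |(3:ℝ)| := by rw [h3]; linarith
        _ ≤ |3 - x| := this)
    rw [hGdef]
    simp only [h1, h2, mul_zero, sub_zero]
  have hhcont : Continuous h :=
    H0_cont.sub (continuous_const.mul (H0_cont.comp (continuous_id.sub continuous_const)))
  have hhhcs : HasCompactSupport h := by
    refine HasCompactSupport.intro (isCompact_Icc (a := (-8:ℝ)) (b := 8)) (fun x hx => ?_)
    have h8 : 8 < |x| := by
      by_contra hcon
      push_neg at hcon
      exact hx (abs_le.mp hcon)
    have h1 : H0 x = 0 := H0_zero (by linarith)
    have h2 : H0 (x - 3) = 0 := H0_zero (by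
      have := abs_sub_abs_le_abs_sub x (3 : ℝ)
      have h3 : |(3:ℝ)| = 3 := by norm_num
      calc (1:ℝ) ≤ 8 - 3 := by norm_num
        _ ≤ |x| - |(3:ℝ)| := by rw [h3]; linarith
        _ ≤ |x - 3| := this)
    rw [hhdef]
    simp only [h1, h2, mul_zero, sub_zero]
  set f : ℝ → ℂ := fun x => ((tentFn x : ℝ) : ℂ) with hfdef
  set g : ℝ → ℂ := fun x => ((G x : ℝ) : ℂ) with hgdef
  have hfL2 : MemLp f 2 (volume : Measure ℝ) :=
    (Complex.continuous_ofReal.comp tent_cont).memLp_of_hasCompactSupport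
      (tent_hcs.comp_left Complex.ofReal_zero)
  have hgL2 : MemLp g 2 (volume : Measure ℝ) :=
    (Complex.continuous_ofReal.comp hGcont).memLp_of_hasCompactSupport
      (hGhcs.comp_left Complex.ofReal_zero)
  have ofRealInt : ∀ F : ℝ → ℝ, (∫ x : ℝ, ((F x : ℝ) : ℂ)) = ((∫ x : ℝ, F x : ℝ) : ℂ) :=
    fun F => integral_ofReal
  have hconv : ∀ x : ℝ, convConj f g x = ((h x : ℝ) : ℂ) := by
    intro x
    have step1 : convConj f g x = ((∫ y : ℝ, tentFn y * G (x - y) : ℝ) : ℂ) := by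
      rw [convConj, ← ofRealInt]
      congr 1
      funext y
      rw [Complex.ofReal_mul, hfdef, hgdef]
      simp only [Complex.conj_ofReal]
    rw [step1]
    have step2 : (fun y : ℝ => tentFn y * G (x - y)) =
        fun y : ℝ => tentFn y * tentFn (x - y) - a * (tentFn y * tentFn ((x - 3) - y)) := by
      funext y
      have harg : x - y - 3 = x - 3 - y := by ring
      rw [hGdef]
      simp only [harg]
      ring
    rw [step2, integral_sub (tent_sq_integrable x) ((tent_sq_integrable (x - 3)).const_mul a),
      integral_const_mul]
    rfl
  have hre : ∀ x : ℝ, (convConj f g x).re = h x := fun x => by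
    rw [hconv x]; exact Complex.ofReal_re _
  have him : ∀ x : ℝ, (convConj f g x).im = 0 := fun x => by
    rw [hconv x]; exact Complex.ofReal_im _
  have hccont : Continuous (convConj f g) := by
    have : convConj f g = fun x => ((h x : ℝ) : ℂ) := funext hconv
    rw [this]
    exact Complex.continuous_ofReal.comp hhcont
  have hchcs : HasCompactSupport (convConj f g) := by
    have : convConj f g = Complex.ofReal ∘ h := funext hconv
    rw [this]
    exact hhhcs.comp_left Complex.ofReal_zero
  have hz' : ∫ x : ℝ, |x| ^ (γ - 1) * h x = 0 := by
    have e : (fun x : ℝ => |x| ^ (γ - 1) * h x) =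
        fun x : ℝ => |x| ^ (γ - 1) * H0 x - a * (|x| ^ (γ - 1) * H0 (x - 3)) := by
      funext x; rw [hhdef]; ring
    rw [e, integral_sub (intA hγ0) ((intB hγ1).const_mul a), integral_const_mul,
      ← hAdef, ← hBdef, hadef, div_mul_cancel₀ _ hBpos.ne', sub_self]
  have hz : ∫ x : ℝ, |x| ^ (γ - 1) * (convConj f g x).re = 0 := by
    simp only [hre]; exact hz'
  have hIccpos' : 0 < ∫ x in Set.Icc (-1 : ℝ) 1, |x| ^ (γ - 1) * h x := by
    have e1 : ∫ x in Set.Icc (-1 : ℝ) 1, |x| ^ (γ - 1) * h x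
        = ∫ x in Set.Icc (-1 : ℝ) 1, |x| ^ (γ - 1) * H0 x := by
      refine setIntegral_congr_fun measurableSet_Icc (fun x hx => ?_)
      rw [Set.mem_Icc] at hx
      have h2 : H0 (x - 3) = 0 := H0_zero (by
        rw [abs_of_neg (by linarith)]; linarith)
      rw [hhdef]
      simp only [h2, mul_zero, sub_zero]
    have e2 : ∫ x in Set.Icc (-1 : ℝ) 1, |x| ^ (γ - 1) * H0 x
        = ∫ x : ℝ, |x| ^ (γ - 1) * H0 x := by
      refine setIntegral_eq_integral_of_forall_compl_eq_zero (fun x hx => ?_)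
      have h1 : 1 ≤ |x| := by
        rw [Set.mem_Icc, ← abs_le, not_le] at hx
        exact hx.le
      rw [H0_zero h1, mul_zero]
    rw [e1, e2]
    exact hApos
  have hIccpos : 0 < ∫ x in Set.Icc (-1 : ℝ) 1, |x| ^ (γ - 1) * (convConj f g x).re := by
    simp only [hre]; exact hIccpos'
  refine ⟨⟨f, g, hfL2, hgL2, him, hccont, hchcs, hz, hIccpos⟩, ?_⟩
  rintro ⟨c, hc, hcall⟩
  have h0 := hcall f g hfL2 hgL2 0
  have four : ∀ F : ℝ → ℂ, 𝓕 F 0 = ∫ x : ℝ, F x := by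
    intro F
    rw [Real.fourier_real_eq_integral_exp_smul]
    simp
  rw [four, four] at h0
  have hR : (∫ x : ℝ, ((|x| ^ (γ - 1) : ℝ) : ℂ) * convConj f g x) = 0 := by
    have e : (fun x : ℝ => ((|x| ^ (γ - 1) : ℝ) : ℂ) * convConj f g x) =
        fun x : ℝ => ((|x| ^ (γ - 1) * h x : ℝ) : ℂ) := by
      funext x
      rw [hconv x, ← Complex.ofReal_mul]
    rw [e, ofRealInt, hz', Complex.ofReal_zero]
  have hL : (∫ x : ℝ, ((if |x| ≤ 1 then |x| ^ (γ - 1) else 0 : ℝ) : ℂ) * convConj f g x) =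
      ((∫ x in Set.Icc (-1 : ℝ) 1, |x| ^ (γ - 1) * h x : ℝ) : ℂ) := by
    have e : (fun x : ℝ => ((if |x| ≤ 1 then |x| ^ (γ - 1) else 0 : ℝ) : ℂ) * convConj f g x) =
        fun x : ℝ => (((Set.Icc (-1 : ℝ) 1).indicator
          (fun x => |x| ^ (γ - 1) * h x) x : ℝ) : ℂ) := by
      funext x
      rw [hconv x]
      by_cases hx : |x| ≤ 1
      · rw [if_pos hx, Set.indicator_of_mem (by rw [Set.mem_Icc]; exact abs_le.mp hx),
          Complex.ofReal_mul]
      · rw [if_neg hx, Set.indicator_of_notMem (by rw [Set.mem_Icc, ← abs_le]; exact hx),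
          Complex.ofReal_zero, zero_mul]
    rw [e, ofRealInt, integral_indicator measurableSet_Icc]
  rw [hR, hL] at h0
  have : ‖((∫ x in Set.Icc (-1 : ℝ) 1, |x| ^ (γ - 1) * h x : ℝ) : ℂ)‖
      = |∫ x in Set.Icc (-1 : ℝ) 1, |x| ^ (γ - 1) * h x| := by
    rw [Complex.norm_real, Real.norm_eq_abs]
  rw [this, norm_zero, mul_zero] at h0
  have := abs_pos.mpr hIccpos'.ne'
  linarith
end
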